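/- Let m ≤ n. On the vector space V with basis {Z_A : A ⊆ {1,...,n}, |A| = m}, define linear maps: X Z_A = Σ_{C ∈ e(A,1)} Z_C, H Z_A = (2|λ(A)| − m(n−m)) Z_A, and Y Z_A = Σ_{B : A ∈ e(B,1)} b(n−b) Z_B where b is the unique element of B \ A. Then [H,X] = 2X, [H,Y] = −2Y, and [X,Y] = H; i.e., X, Y, H realize 𝔰𝔩_2 on V. -/

import Mathlib

/-!
All three operators preserve `|A|`, so it suffices to check the relations on the span of all
`Z_A`, `A ⊆ Fin n`, and restrict to the block `|A| = m`. Moving one element of `A` up by one adds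
one box to `λ(A)`, which gives `[H, X] = 2X` and `[H, Y] = -2Y`. For `[X, Y]` at `(C, A)` with
`C ≠ A`, the terms of `XY` and `YX` are matched by completing the square of swaps `S → A`,
`S → C` to its opposite corner, and the weights agree because the swap from `C` to that corner
moves the same element as the swap from `S` to `A`. On the diagonal, both sums run over the
pairs `(s, s + 1)` with weight `g (s + 1)`, `g t = (n - t) t`; as `g 0 = g n = 0` their difference
telescopes to `∑_{t ∈ A} (g t - g (t + 1)) = ∑_{t ∈ A} (2t + 1 - n)`, which is
`2|λ(A)| - |A| (n - |A|)` because `|λ(A)| = ∑ A - |A| (|A| - 1) / 2` (elements of `Fin n` read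
as `0, …, n - 1`).
-/

open Finset
open scoped Classical

/-- `|λ(A)| = Σᵢ (Aᵢ − i)`, the number of boxes of the partition associated to `A`. -/
def lamWt {n : ℕ} (A : Finset (Fin n)) : ℕ :=
  ∑ i : Fin A.card, (((A.orderEmbOfFin rfl i) : ℕ) - (i : ℕ))

/-- `oneBoxUp A C` holds iff the Ferrers diagram of `λ(C)` is obtained from that
of `λ(A)` by adding one box; concretely, `C` is obtained from `A` by replacing
some element `a ∈ A` by `a + 1 ∉ A`.  Thus `C ∈ e(A,1)`. -/
def oneBoxUp {n : ℕ} (A C : Finset (Fin n)) : Prop :=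
  ∃ a b : Fin n, a ∈ A ∧ b ∉ A ∧ (b : ℕ) = (a : ℕ) + 1 ∧ C = insert b (A.erase a)

/-- The raising operator `X Z_A = Σ_{C ∈ e(A,1)} Z_C`, as a matrix in the basis
`(Z_A)_{|A| = m}` (the `(C,A)` entry is the coefficient of `Z_C` in `X Z_A`). -/
noncomputable def Xmat (n m : ℕ) :
    Matrix {A : Finset (Fin n) // A.card = m} {A : Finset (Fin n) // A.card = m} ℂ :=
  fun C A => if oneBoxUp A.1 C.1 then 1 else 0

/-- The lowering operator `Y Z_A = Σ_{B : A ∈ e(B,1)} (n−b)·b · Z_B`, where `b`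
is the unique element of `B ∖ A` (as a value in `{1,…,n}`, i.e. `b = b₀ + 1` for
the zero-indexed element `b₀ : Fin n`). -/
noncomputable def Ymat (n m : ℕ) :
    Matrix {A : Finset (Fin n) // A.card = m} {A : Finset (Fin n) // A.card = m} ℂ :=
  fun B A => if oneBoxUp B.1 A.1 then
      ∑ b ∈ B.1 \ A.1, ((n : ℂ) - ((b : ℕ) + 1)) * ((b : ℕ) + 1)
    else 0

/-- The Cartan operator `H Z_A = (2|λ(A)| − m(n−m)) Z_A`. -/
noncomputable def Hmat (n m : ℕ) :
    Matrix {A : Finset (Fin n) // A.card = m} {A : Finset (Fin n) // A.card = m} ℂ :=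
  fun B A => if B = A then 2 * (lamWt A.1 : ℂ) - (m : ℂ) * ((n : ℂ) - (m : ℂ)) else 0

theorem Fin.val_le_of_strictMono {k n : ℕ} {f : Fin k → Fin n} (hf : StrictMono f) (i : Fin k) :
    (i : ℕ) ≤ f i := by
  simpa using card_le_card_of_injOn f (s := Iio i) (t := Iio (f i))
    (fun j hj => by simpa using hf (by simpa using hj)) hf.injective.injOn

namespace Finset

theorem sum_filter_not_and_sub_sum_filter_and_not {ι M : Type*} [AddCommGroup M]
    (s : Finset ι) (P Q : ι → Prop) [DecidablePred P] [DecidablePred Q] (f : ι → M) :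
    ∑ i ∈ s with ¬P i ∧ Q i, f i - ∑ i ∈ s with P i ∧ ¬Q i, f i =
      ∑ i ∈ s with Q i, f i - ∑ i ∈ s with P i, f i := by
  simp only [sum_filter, ← sum_sub_distrib]
  refine sum_congr rfl fun i _ => ?_
  by_cases hP : P i <;> by_cases hQ : Q i <;> simp [hP, hQ]

variable {α : Type*} [DecidableEq α]

def IsSwap (S T : Finset α) (a b : α) : Prop :=
  a ∈ S ∧ b ∉ S ∧ T = insert b (S.erase a)

/-- The corner opposite to `S` of a square of swaps `S → A`, `S → C`. -/
def oppositeCorner (S A C : Finset α) : Finset α :=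
  A ∩ C ∪ (A ∪ C) \ S

namespace IsSwap

variable {S T A C : Finset α} {a b a' b' : α}

theorem ne (h : IsSwap S T a b) : a ≠ b :=
  fun hab => h.2.1 (hab ▸ h.1)

theorem symm (h : IsSwap S T a b) : IsSwap T S b a := by
  have hab := h.ne
  obtain ⟨ha, hb, rfl⟩ := h
  refine ⟨mem_insert_self b _, by simp [hab], ?_⟩
  rw [erase_insert (fun hb' => hb (mem_of_mem_erase hb')), insert_erase ha]

theorem sdiff_eq (h : IsSwap S T a b) : S \ T = {a} := by
  obtain ⟨ha, hb, rfl⟩ := h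
  ext x
  by_cases hxa : x = a <;> by_cases hxb : x = b <;> simp_all

theorem card_eq (h : IsSwap S T a b) : T.card = S.card := by
  obtain ⟨ha, hb, rfl⟩ := h
  rw [card_insert_of_notMem (fun hb' => hb (mem_of_mem_erase hb')), card_erase_add_one ha]

theorem sum_add {M : Type*} [AddCommMonoid M] (h : IsSwap S T a b) (f : α → M) :
    ∑ x ∈ T, f x + f a = ∑ x ∈ S, f x + f b := by
  obtain ⟨ha, hb, rfl⟩ := h
  rw [sum_insert (fun hb' => hb (mem_of_mem_erase hb')), add_comm (f b), add_assoc,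
    add_comm (f b), ← add_assoc, sum_erase_add _ _ ha]

theorem ne_of_ne (hA : IsSwap S A a b) (hC : IsSwap S C a' b') (hAC : A ≠ C)
    (h : a = a' ↔ b = b') : a ≠ a' ∧ b ≠ b' := by
  have ha : a ≠ a' := fun ha => hAC (by rw [hA.2.2, hC.2.2, ha, h.1 ha])
  exact ⟨ha, mt h.2 ha⟩

theorem square (hA : IsSwap S A a b) (hC : IsSwap S C a' b') (ha : a ≠ a') (hb : b ≠ b') :
    IsSwap A (oppositeCorner S A C) a' b' ∧ IsSwap C (oppositeCorner S A C) a b := by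
  obtain ⟨haS, hbS, rfl⟩ := hA
  obtain ⟨ha'S, hb'S, rfl⟩ := hC
  simp only [IsSwap, Finset.ext_iff, oppositeCorner, mem_union, mem_inter, mem_sdiff,
    mem_insert, mem_erase]
  grind

theorem oppositeCorner_oppositeCorner (hA : IsSwap S A a b) (hC : IsSwap S C a' b')
    (ha : a ≠ a') (hb : b ≠ b') : oppositeCorner (oppositeCorner S A C) A C = S := by
  obtain ⟨hA', hC'⟩ := hA.square hC ha hb
  exact (hA'.symm.square hC'.symm hb.symm ha.symm).1.2.2.trans hA.symm.2.2.symm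

end IsSwap

end Finset

namespace Matrix

variable {ι κ R : Type*} [Fintype ι]

theorem diagonal_mul_sub_mul_diagonal_eq_smul [DecidableEq ι] [CommRing R] {d : ι → R}
    {M : Matrix ι ι R} {c : R} (h : ∀ i j, M i j ≠ 0 → d i - d j = c) :
    diagonal d * M - M * diagonal d = c • M := by
  ext i j
  rw [sub_apply, diagonal_mul, mul_diagonal, smul_apply, smul_eq_mul]
  by_cases hij : M i j = 0
  · simp [hij]
  · rw [← h i j hij]
    ring

theorem submatrix_fiber_mul [DecidableEq κ] [NonUnitalNonAssocSemiring R] (f : ι → κ) (c : κ)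
    (M N : Matrix ι ι R) (hM : ∀ i k, f i ≠ f k → M i k = 0) :
    (M * N).submatrix (Subtype.val : {i // f i = c} → ι) Subtype.val =
      M.submatrix (Subtype.val : {i // f i = c} → ι) Subtype.val *
        N.submatrix Subtype.val (Subtype.val : {i // f i = c} → ι) := by
  ext i j
  simp only [submatrix_apply, mul_apply]
  have hout : ∑ k : {k // f k ≠ c}, M i k * N k j = 0 :=
    Finset.sum_eq_zero fun k _ => by rw [hM i k (by rw [i.2]; exact Ne.symm k.2), zero_mul]
  rw [← Fintype.sum_subtype_add_sum_subtype (fun k => f k = c), hout, add_zero]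

end Matrix

section Operators

variable {n : ℕ} {S T A C : Finset (Fin n)}

theorem oneBoxUp_iff :
    oneBoxUp A C ↔ ∃ a b : Fin n, (b : ℕ) = a + 1 ∧ A.IsSwap C a b := by
  simp only [oneBoxUp, IsSwap]
  grind

theorem oneBoxUp.card_eq (h : oneBoxUp A C) : C.card = A.card := by
  obtain ⟨a, b, -, hab⟩ := oneBoxUp_iff.1 h
  exact hab.card_eq

theorem lamWt_add_sum_range (A : Finset (Fin n)) :
    lamWt A + ∑ i ∈ range A.card, i = ∑ a ∈ A, (a : ℕ) := by
  let e := A.orderEmbOfFin rfl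
  have hsum : ∑ a ∈ A, (a : ℕ) = ∑ i, (e i : ℕ) := by
    conv_lhs => rw [← A.map_orderEmbOfFin_univ rfl]
    rw [sum_map]
    rfl
  rw [hsum, lamWt, ← Fin.sum_univ_eq_sum_range, ← sum_add_distrib]
  exact sum_congr rfl fun i _ => Nat.sub_add_cancel (Fin.val_le_of_strictMono e.strictMono i)

theorem two_mul_lamWt_add (A : Finset (Fin n)) :
    2 * lamWt A + A.card * A.card = 2 * ∑ a ∈ A, (a : ℕ) + A.card := by
  have hgauss := sum_range_id_mul_two A.card
  rw [← lamWt_add_sum_range]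
  rcases Nat.eq_zero_or_pos A.card with hc | hc
  · simp [hc]
  · have : A.card * (A.card - 1) + A.card = A.card * A.card := by
      rw [← Nat.mul_add_one, Nat.sub_add_cancel hc]
    omega

theorem oneBoxUp.lamWt_eq (h : oneBoxUp A C) : lamWt C = lamWt A + 1 := by
  obtain ⟨a, b, hb, hab⟩ := oneBoxUp_iff.1 h
  have hsum := hab.sum_add (fun x => (x : ℕ))
  have hA := lamWt_add_sum_range A
  have hC := lamWt_add_sum_range C
  rw [hab.card_eq] at hC
  omega

noncomputable def raiseOp (n : ℕ) : Matrix (Finset (Fin n)) (Finset (Fin n)) ℂ :=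
  fun C A => if oneBoxUp A C then 1 else 0

noncomputable def lowerWeight (n : ℕ) (B A : Finset (Fin n)) : ℂ :=
  ∑ b ∈ B \ A, ((n : ℂ) - ((b : ℕ) + 1)) * ((b : ℕ) + 1)

noncomputable def lowerOp (n : ℕ) : Matrix (Finset (Fin n)) (Finset (Fin n)) ℂ :=
  fun B A => if oneBoxUp B A then lowerWeight n B A else 0

noncomputable def cartanWeight (n : ℕ) (A : Finset (Fin n)) : ℂ :=
  2 * (lamWt A : ℂ) - (A.card : ℂ) * ((n : ℂ) - A.card)

noncomputable def cartanOp (n : ℕ) : Matrix (Finset (Fin n)) (Finset (Fin n)) ℂ :=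
  Matrix.diagonal (cartanWeight n)

theorem Xmat_eq_submatrix (m : ℕ) :
    Xmat n m = (raiseOp n).submatrix Subtype.val Subtype.val := rfl

theorem Ymat_eq_submatrix (m : ℕ) :
    Ymat n m = (lowerOp n).submatrix Subtype.val Subtype.val := rfl

theorem Hmat_eq_submatrix (m : ℕ) :
    Hmat n m = (cartanOp n).submatrix Subtype.val Subtype.val := by
  ext B A
  by_cases hBA : B = A
  · subst hBA
    simp [Hmat, cartanOp, cartanWeight, B.2]
  · simp [Hmat, cartanOp, hBA, Subtype.val_injective.ne hBA]

theorem oneBoxUp_of_raiseOp_apply_ne_zero (h : raiseOp n C A ≠ 0) :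
    oneBoxUp A C :=
  of_not_not fun hAC => h (if_neg hAC)

theorem oneBoxUp_of_lowerOp_apply_ne_zero {B A : Finset (Fin n)} (h : lowerOp n B A ≠ 0) :
    oneBoxUp B A :=
  of_not_not fun hBA => h (if_neg hBA)

theorem raiseOp_apply_eq_zero (h : C.card ≠ A.card) :
    raiseOp n C A = 0 :=
  if_neg fun hAC => h hAC.card_eq

theorem lowerOp_apply_eq_zero {B A : Finset (Fin n)} (h : B.card ≠ A.card) :
    lowerOp n B A = 0 :=
  if_neg fun hBA => h hBA.card_eq.symm

theorem cartanOp_apply_eq_zero {B A : Finset (Fin n)} (h : B.card ≠ A.card) :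
    cartanOp n B A = 0 :=
  Matrix.diagonal_apply_ne _ fun hBA => h (congrArg card hBA)

theorem oneBoxUp.cartanWeight_eq (h : oneBoxUp A C) :
    cartanWeight n C = cartanWeight n A + 2 := by
  simp only [cartanWeight, h.lamWt_eq, h.card_eq]
  push_cast
  ring

theorem cartanOp_mul_sub_mul_cartanOp_raiseOp :
    cartanOp n * raiseOp n - raiseOp n * cartanOp n = (2 : ℂ) • raiseOp n :=
  Matrix.diagonal_mul_sub_mul_diagonal_eq_smul fun C A hCA => by
    rw [(oneBoxUp_of_raiseOp_apply_ne_zero hCA).cartanWeight_eq]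
    ring

theorem cartanOp_mul_sub_mul_cartanOp_lowerOp :
    cartanOp n * lowerOp n - lowerOp n * cartanOp n = (-2 : ℂ) • lowerOp n :=
  Matrix.diagonal_mul_sub_mul_diagonal_eq_smul fun B A hBA => by
    rw [(oneBoxUp_of_lowerOp_apply_ne_zero hBA).cartanWeight_eq]
    ring

def succPairs (n : ℕ) : Finset (Fin n × Fin n) :=
  univ.filter fun p => (p.2 : ℕ) = p.1 + 1

theorem sum_succPairs_filter_snd_mem {M : Type*} [AddCommMonoid M] (A : Finset (Fin n))
    (g : ℕ → M) (hg : g 0 = 0) :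
    ∑ p ∈ (succPairs n).filter (·.2 ∈ A), g p.2 = ∑ t ∈ A, g t := by
  refine sum_bij_ne_zero (fun p _ _ => p.2) (fun p hp _ => (mem_filter.1 hp).2) ?_ ?_
    (fun _ _ _ => rfl)
  · intro p hp _ q hq _ hpq
    simp only [succPairs, mem_filter, mem_univ, true_and] at hp hq
    exact Prod.ext (Fin.ext (by have := congrArg Fin.val hpq; omega)) hpq
  · intro t ht hgt
    have ht0 : (t : ℕ) ≠ 0 := fun h => hgt (by rw [h, hg])
    exact ⟨(⟨t - 1, by omega⟩, t), by simp [succPairs, ht]; omega, hgt, rfl⟩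

theorem sum_succPairs_filter_fst_mem {M : Type*} [AddCommMonoid M] (A : Finset (Fin n))
    (g : ℕ → M) (hg : g n = 0) :
    ∑ p ∈ (succPairs n).filter (·.1 ∈ A), g p.2 = ∑ s ∈ A, g (s + 1) := by
  refine sum_bij_ne_zero (fun p _ _ => p.1) (fun p hp _ => (mem_filter.1 hp).2) ?_ ?_ ?_
  · intro p hp _ q hq _ hpq
    simp only [succPairs, mem_filter, mem_univ, true_and] at hp hq
    exact Prod.ext hpq (Fin.ext (by have := congrArg Fin.val hpq; omega))
  · intro s hs hgs
    have hs1 : (s : ℕ) + 1 ≠ n := fun h => hgs (by rw [h, hg])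
    exact ⟨(s, ⟨s + 1, by omega⟩), by simp [succPairs, hs], hgs, rfl⟩
  · intro p hp _
    simp only [succPairs, mem_filter, mem_univ, true_and] at hp
    rw [hp.1]

noncomputable def lowerCoeff (n t : ℕ) : ℂ :=
  ((n : ℂ) - t) * t

theorem lowerWeight_of_isSwap {B A : Finset (Fin n)} {a b : Fin n} (h : B.IsSwap A a b) :
    lowerWeight n B A = lowerCoeff n (a + 1) := by
  rw [lowerWeight, h.sdiff_eq, sum_singleton, lowerCoeff]
  push_cast
  rfl

theorem sum_lowerWeight_up (A : Finset (Fin n)) :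
    ∑ T ∈ univ.filter (oneBoxUp A), lowerWeight n A T =
      ∑ p ∈ (succPairs n).filter (fun p => p.1 ∈ A ∧ p.2 ∉ A), lowerCoeff n p.2 := by
  symm
  refine sum_bij (fun p _ => insert p.2 (A.erase p.1)) ?_ ?_ ?_ ?_
  · intro p hp
    simp only [succPairs, mem_filter, mem_univ, true_and] at hp ⊢
    exact ⟨p.1, p.2, hp.2.1, hp.2.2, hp.1, rfl⟩
  · intro p hp q hq hpq
    simp only [succPairs, mem_filter, mem_univ, true_and] at hp hq
    have hp' : A.IsSwap _ p.1 p.2 := ⟨hp.2.1, hp.2.2, rfl⟩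
    have hq' : A.IsSwap _ q.1 q.2 := ⟨hq.2.1, hq.2.2, hpq⟩
    exact Prod.ext (singleton_injective (hp'.sdiff_eq.symm.trans hq'.sdiff_eq))
      (singleton_injective (hp'.symm.sdiff_eq.symm.trans hq'.symm.sdiff_eq))
  · intro T hT
    obtain ⟨a, b, ha, hb, hab, rfl⟩ := (mem_filter.1 hT).2
    exact ⟨(a, b), by simp [succPairs, ha, hb, hab], rfl⟩
  · intro p hp
    simp only [succPairs, mem_filter, mem_univ, true_and] at hp
    rw [lowerWeight_of_isSwap ⟨hp.2.1, hp.2.2, rfl⟩, hp.1]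

theorem sum_lowerWeight_down (A : Finset (Fin n)) :
    ∑ S ∈ univ.filter (oneBoxUp · A), lowerWeight n S A =
      ∑ p ∈ (succPairs n).filter (fun p => p.1 ∉ A ∧ p.2 ∈ A), lowerCoeff n p.2 := by
  symm
  refine sum_bij (fun p _ => insert p.1 (A.erase p.2)) ?_ ?_ ?_ ?_
  · intro p hp
    simp only [succPairs, mem_filter, mem_univ, true_and] at hp ⊢
    exact oneBoxUp_iff.2 ⟨p.1, p.2, hp.1, IsSwap.symm ⟨hp.2.2, hp.2.1, rfl⟩⟩
  · intro p hp q hq hpq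
    simp only [succPairs, mem_filter, mem_univ, true_and] at hp hq
    have hp' : A.IsSwap _ p.2 p.1 := ⟨hp.2.2, hp.2.1, rfl⟩
    have hq' : A.IsSwap _ q.2 q.1 := ⟨hq.2.2, hq.2.1, hpq⟩
    exact Prod.ext (singleton_injective (hp'.symm.sdiff_eq.symm.trans hq'.symm.sdiff_eq))
      (singleton_injective (hp'.sdiff_eq.symm.trans hq'.sdiff_eq))
  · intro S hS
    obtain ⟨a, b, hab, hSA⟩ := oneBoxUp_iff.1 (mem_filter.1 hS).2
    obtain ⟨hb, ha, hS⟩ := hSA.symm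
    exact ⟨(a, b), by simp [succPairs, ha, hb, hab], hS.symm⟩
  · intro p hp
    simp only [succPairs, mem_filter, mem_univ, true_and] at hp
    rw [lowerWeight_of_isSwap (IsSwap.symm ⟨hp.2.2, hp.2.1, rfl⟩), hp.1]

theorem sum_lowerWeight_down_sub_up (A : Finset (Fin n)) :
    ∑ S ∈ univ.filter (oneBoxUp · A), lowerWeight n S A -
      ∑ T ∈ univ.filter (oneBoxUp A), lowerWeight n A T = cartanWeight n A := by
  rw [sum_lowerWeight_down, sum_lowerWeight_up, sum_filter_not_and_sub_sum_filter_and_not,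
    sum_succPairs_filter_snd_mem A _ (by simp [lowerCoeff]),
    sum_succPairs_filter_fst_mem A _ (by simp [lowerCoeff]), ← sum_sub_distrib]
  have hgauss :
      (2 * lamWt A + A.card * A.card : ℂ) = 2 * ∑ a ∈ A, ((a : ℕ) : ℂ) + A.card :=
    mod_cast two_mul_lamWt_add A
  calc ∑ s ∈ A, (lowerCoeff n s - lowerCoeff n (s + 1))
      = ∑ s ∈ A, (2 * ((s : ℕ) : ℂ) + (1 - n)) :=
        sum_congr rfl fun s _ => by simp only [lowerCoeff]; push_cast; ring
    _ = 2 * ∑ s ∈ A, ((s : ℕ) : ℂ) + A.card * (1 - n) := by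
        rw [sum_add_distrib, ← mul_sum, sum_const, nsmul_eq_mul]
    _ = cartanWeight n A := by
        rw [cartanWeight]
        linear_combination -hgauss

theorem oneBoxUp_oppositeCorner_of_oneBoxUp (hA : oneBoxUp S A) (hC : oneBoxUp S C)
    (hAC : A ≠ C) :
    oneBoxUp A (oppositeCorner S A C) ∧ oneBoxUp C (oppositeCorner S A C) ∧
      oppositeCorner (oppositeCorner S A C) A C = S ∧
      lowerWeight n S A = lowerWeight n C (oppositeCorner S A C) := by
  obtain ⟨a, b, hab, hA⟩ := oneBoxUp_iff.1 hA
  obtain ⟨a', b', hab', hC⟩ := oneBoxUp_iff.1 hC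
  obtain ⟨ha, hb⟩ := hA.ne_of_ne hC hAC (by simp only [Fin.ext_iff]; omega)
  obtain ⟨hA', hC'⟩ := hA.square hC ha hb
  exact ⟨oneBoxUp_iff.2 ⟨a', b', hab', hA'⟩, oneBoxUp_iff.2 ⟨a, b, hab, hC'⟩,
    hA.oppositeCorner_oppositeCorner hC ha hb,
    by rw [lowerWeight_of_isSwap hA, lowerWeight_of_isSwap hC']⟩

theorem oppositeCorner_oneBoxUp_of_oneBoxUp (hA : oneBoxUp A T) (hC : oneBoxUp C T)
    (hAC : A ≠ C) :
    oneBoxUp (oppositeCorner T A C) A ∧ oneBoxUp (oppositeCorner T A C) C ∧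
      oppositeCorner (oppositeCorner T A C) A C = T := by
  obtain ⟨a, b, hab, hA⟩ := oneBoxUp_iff.1 hA
  obtain ⟨a', b', hab', hC⟩ := oneBoxUp_iff.1 hC
  obtain ⟨hb, ha⟩ := hA.symm.ne_of_ne hC.symm hAC (by simp only [Fin.ext_iff]; omega)
  obtain ⟨hA', hC'⟩ := hA.symm.square hC.symm hb ha
  exact ⟨oneBoxUp_iff.2 ⟨a', b', hab', hA'.symm⟩, oneBoxUp_iff.2 ⟨a, b, hab, hC'.symm⟩,
    hA.symm.oppositeCorner_oppositeCorner hC.symm hb ha⟩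

theorem sum_lowerWeight_eq_of_ne (hAC : A ≠ C) :
    ∑ S ∈ univ.filter (fun S => oneBoxUp S C ∧ oneBoxUp S A), lowerWeight n S A =
      ∑ T ∈ univ.filter (fun T => oneBoxUp C T ∧ oneBoxUp A T), lowerWeight n C T := by
  refine sum_nbij' (oppositeCorner · A C) (oppositeCorner · A C) ?_ ?_ ?_ ?_ ?_
  all_goals
    intro S hS
    obtain ⟨hC, hA⟩ := (mem_filter.1 hS).2
  · have := oneBoxUp_oppositeCorner_of_oneBoxUp hA hC hAC
    simp [this.1, this.2.1]
  · have := oppositeCorner_oneBoxUp_of_oneBoxUp hA hC hAC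
    simp [this.1, this.2.1]
  · exact (oneBoxUp_oppositeCorner_of_oneBoxUp hA hC hAC).2.2.1
  · exact (oppositeCorner_oneBoxUp_of_oneBoxUp hA hC hAC).2.2
  · exact (oneBoxUp_oppositeCorner_of_oneBoxUp hA hC hAC).2.2.2

theorem raiseOp_mul_lowerOp_apply (C A : Finset (Fin n)) :
    (raiseOp n * lowerOp n) C A =
      ∑ S ∈ univ.filter (fun S => oneBoxUp S C ∧ oneBoxUp S A), lowerWeight n S A := by
  rw [Matrix.mul_apply, sum_filter]
  refine sum_congr rfl fun S _ => ?_
  simp only [raiseOp, lowerOp, ite_and]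
  split_ifs <;> simp

theorem lowerOp_mul_raiseOp_apply (C A : Finset (Fin n)) :
    (lowerOp n * raiseOp n) C A =
      ∑ T ∈ univ.filter (fun T => oneBoxUp C T ∧ oneBoxUp A T), lowerWeight n C T := by
  rw [Matrix.mul_apply, sum_filter]
  refine sum_congr rfl fun T _ => ?_
  simp only [raiseOp, lowerOp, ite_and]
  split_ifs <;> simp

theorem raiseOp_mul_sub_mul_raiseOp_lowerOp :
    raiseOp n * lowerOp n - lowerOp n * raiseOp n = cartanOp n := by
  ext C A
  rw [Matrix.sub_apply, raiseOp_mul_lowerOp_apply, lowerOp_mul_raiseOp_apply]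
  by_cases hCA : C = A
  · subst hCA
    simp only [and_self, cartanOp, Matrix.diagonal_apply_eq]
    exact sum_lowerWeight_down_sub_up C
  · rw [sum_lowerWeight_eq_of_ne (Ne.symm hCA), sub_self, cartanOp,
      Matrix.diagonal_apply_ne _ hCA]

end Operators

theorem sl2_realization_general (n m : ℕ) :
    Hmat n m * Xmat n m - Xmat n m * Hmat n m = (2 : ℂ) • Xmat n m
    ∧ Hmat n m * Ymat n m - Ymat n m * Hmat n m = (-2 : ℂ) • Ymat n m
    ∧ Xmat n m * Ymat n m - Ymat n m * Xmat n m = Hmat n m := by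
  have hX := fun N =>
    Matrix.submatrix_fiber_mul card m (raiseOp n) N fun _ _ => raiseOp_apply_eq_zero
  have hY := fun N =>
    Matrix.submatrix_fiber_mul card m (lowerOp n) N fun _ _ => lowerOp_apply_eq_zero
  have hH := fun N =>
    Matrix.submatrix_fiber_mul card m (cartanOp n) N fun _ _ => cartanOp_apply_eq_zero
  simp only [Xmat_eq_submatrix, Ymat_eq_submatrix, Hmat_eq_submatrix, ← hX, ← hY, ← hH]
  refine ⟨?_, ?_, ?_⟩ <;> ext i j
  · exact congr_fun₂ cartanOp_mul_sub_mul_cartanOp_raiseOp i.1 j.1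
  · exact congr_fun₂ cartanOp_mul_sub_mul_cartanOp_lowerOp i.1 j.1
  · exact congr_fun₂ raiseOp_mul_sub_mul_raiseOp_lowerOp i.1 j.1

/-- Proctor: `X`, `Y`, `H` realize `𝔰𝔩₂` on the span of the `Z_A`:
`[H,X] = 2X`, `[H,Y] = −2Y`, `[X,Y] = H`. -/
theorem sl2_realization (n m : ℕ) (hm : m ≤ n) :
    Hmat n m * Xmat n m - Xmat n m * Hmat n m = (2 : ℂ) • Xmat n m
    ∧ Hmat n m * Ymat n m - Ymat n m * Hmat n m = (-2 : ℂ) • Ymat n m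
    ∧ Xmat n m * Ymat n m - Ymat n m * Xmat n m = Hmat n m :=
  sl2_realization_general n m
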